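/- If H is a countable nonempty family of free filters on ℕ, each of which, as a subset of 2^ℕ, does not have the Baire property, then the intersection ⋂H does not have the Baire property. -/

import Mathlib

open Filter Set

/-- The subset of the Cantor space `ℕ → Bool` corresponding to a filter `F` on `ℕ`,
identifying a subset of `ℕ` with its characteristic function. -/
def filterSet (F : Filter ℕ) : Set (ℕ → Bool) :=
  {x | {n | x n = true} ∈ F}

/-- A set `S ⊆ 2^ℕ` has the Baire property if it is the symmetric difference of an
open set and a meager set. -/
def HasBaireProperty (S : Set (ℕ → Bool)) : Prop :=
  ∃ U M : Set (ℕ → Bool), IsOpen U ∧ IsMeagre M ∧ S = symmDiff U M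

lemma exists_prefix_subset {U : Set (ℕ → Bool)} (hU : IsOpen U) {y : ℕ → Bool} (hy : y ∈ U) :
    ∃ m, ∀ x, (∀ n < m, x n = y n) → x ∈ U := by
  rw [isOpen_pi_iff] at hU
  obtain ⟨I, u, hu, hsub⟩ := hU y hy
  refine ⟨(I.sup id) + 1, fun x hx => hsub ?_⟩
  intro a ha
  have : x a = y a := hx a (Nat.lt_succ_of_le (Finset.le_sup (f := id) ha))
  rw [this]
  exact (hu a ha).2

/-- the xor-translation homeomorphism -/
def xorHomeo (v : ℕ → Bool) : (ℕ → Bool) ≃ₜ (ℕ → Bool) where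
  toFun x := fun n => xor (x n) (v n)
  invFun x := fun n => xor (x n) (v n)
  left_inv x := by funext n; simp [Bool.xor_assoc]
  right_inv x := by funext n; simp [Bool.xor_assoc]
  continuous_toFun := continuous_pi fun n =>
    (continuous_of_discreteTopology (f := fun b => xor b (v n))).comp (continuous_apply n)
  continuous_invFun := continuous_pi fun n =>
    (continuous_of_discreteTopology (f := fun b => xor b (v n))).comp (continuous_apply n)

lemma mem_filterSet_of_superset {F : Filter ℕ} (hF : F ≤ Filter.cofinite)
    {x y : ℕ → Bool} (hx : x ∈ filterSet F) {m : ℕ}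
    (h : ∀ n, m ≤ n → x n = true → y n = true) : y ∈ filterSet F := by
  have hIci : Set.Ici m ∈ F := hF (by
    simp only [Filter.mem_cofinite, compl_Ici]
    exact Set.finite_Iio m)
  exact Filter.mem_of_superset (Filter.inter_mem hx hIci)
    (fun n hn => h n hn.2 hn.1)

lemma isMeagre_iUnion' {ι : Type*} [Countable ι] {s : ι → Set (ℕ → Bool)}
    (hs : ∀ i, IsMeagre (s i)) : IsMeagre (⋃ i, s i) := by
  rw [IsMeagre, compl_iUnion]
  exact (countable_iInter_mem).mpr hs

lemma meagre_of_baireProperty {F : Filter ℕ} (hne : F.NeBot) (hF : F ≤ Filter.cofinite)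
    (h : HasBaireProperty (filterSet F)) : IsMeagre (filterSet F) := by
  classical
  obtain ⟨U, M, hU, hM, hSM⟩ := h
  rcases eq_empty_or_nonempty U with rfl | ⟨y, hy⟩
  · rw [hSM]; simpa [symmDiff_def] using hM
  -- nonempty open part: derive a contradiction
  exfalso
  obtain ⟨m, hm⟩ := exists_prefix_subset hU hy
  set S := filterSet F with hS
  -- S differs from U by M
  have hUS : ∀ x, x ∈ U → x ∉ S → x ∈ M := by
    intro x hxU hxS
    by_contra hxM
    apply hxS
    rw [hSM, Set.symmDiff_def]
    exact Or.inl ⟨hxU, hxM⟩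
  -- base cylinder
  have hbase : IsMeagre (Sᶜ ∩ {x | ∀ n < m, x n = y n}) := by
    refine hM.mono ?_
    rintro x ⟨hxS, hxc⟩
    exact hUS x (hm x hxc) hxS
  -- xor translation preserves S
  have hxorS : ∀ v : ℕ → Bool, (∀ n, m ≤ n → v n = false) →
      ∀ x, x ∈ S ↔ (xorHomeo v) x ∈ S := by
    intro v hv x
    constructor
    · intro hx
      refine mem_filterSet_of_superset hF hx (m := m) (fun n hn hxn => ?_)
      show xor (x n) (v n) = true
      rw [hv n hn, hxn]; rfl
    · intro hx
      refine mem_filterSet_of_superset hF hx (m := m) (fun n hn hxn => ?_)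
      have : xor (x n) (v n) = true := hxn
      rw [hv n hn] at this
      simpa using this
  -- every cylinder of length m has meagre S-complement
  have hcyl : ∀ p : Fin m → Bool, IsMeagre (Sᶜ ∩ {x | ∀ n (hn : n < m), x n = p ⟨n, hn⟩}) := by
    intro p
    set v : ℕ → Bool := fun n => if hn : n < m then xor (p ⟨n, hn⟩) (y n) else false with hv
    have hvsupp : ∀ n, m ≤ n → v n = false := by
      intro n hn; simp [hv, Nat.not_lt_of_le hn]
    have key : Sᶜ ∩ {x | ∀ n (hn : n < m), x n = p ⟨n, hn⟩}
        ⊆ (xorHomeo v) ⁻¹' (Sᶜ ∩ {x | ∀ n < m, x n = y n}) := by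
      rintro x ⟨hxS, hxc⟩
      constructor
      · intro hmem
        exact hxS ((hxorS v hvsupp x).mpr hmem)
      · intro n hn
        show xor (x n) (v n) = y n
        rw [hxc n hn]
        simp [hv, hn, Bool.xor_assoc]
    exact (hbase.preimage_of_isOpenMap (xorHomeo v).continuous
      (xorHomeo v).isOpenMap).mono key
  -- hence S is comeagre
  have hScomp : IsMeagre Sᶜ := by
    have : Sᶜ = ⋃ p : Fin m → Bool, (Sᶜ ∩ {x | ∀ n (hn : n < m), x n = p ⟨n, hn⟩}) := by
      ext x
      simp only [mem_iUnion, mem_inter_iff, mem_setOf_eq]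
      constructor
      · intro hx; exact ⟨fun i => x i, hx, fun n hn => rfl⟩
      · rintro ⟨p, hx, -⟩; exact hx
    rw [this]
    exact isMeagre_iUnion' hcyl
  -- flip maps S into its complement
  have hflip : S ⊆ (xorHomeo (fun _ => true)) ⁻¹' Sᶜ := by
    intro x hx hmem
    have h1 : {n | x n = true} ∈ F := hx
    have h2 : {n | xor (x n) true = true} ∈ F := hmem
    have h3 : {n | x n = true} ∩ {n | xor (x n) true = true} = ∅ := by
      ext n; simp
    have := Filter.inter_mem h1 h2
    rw [h3] at this
    exact hne.ne (Filter.empty_mem_iff_bot.mp this)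
  have hSmeagre : IsMeagre S :=
    (hScomp.preimage_of_isOpenMap (xorHomeo _).continuous (xorHomeo _).isOpenMap).mono hflip
  -- S and Sᶜ both meagre: contradiction
  have : IsMeagre (univ : Set (ℕ → Bool)) := by
    have := isMeagre_iUnion' (s := fun b : Bool => if b then S else Sᶜ)
      (by intro b; cases b <;> simp [hSmeagre, hScomp])
    refine this.mono ?_
    intro x _
    by_cases hx : x ∈ S
    · exact mem_iUnion.mpr ⟨true, by simpa using hx⟩
    · exact mem_iUnion.mpr ⟨false, by simpa using hx⟩
  rw [IsMeagre, compl_univ] at this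
  have hdense : Dense (∅ : Set (ℕ → Bool)) := dense_of_mem_residual this
  simpa using hdense.nonempty


lemma meagre_of_feeble {F : Filter ℕ} {e : ℕ → ℕ} (he : StrictMono e)
    (h : ∀ A ∈ F, ∀ᶠ k in atTop, (A ∩ Set.Ico (e k) (e (k+1))).Nonempty) :
    IsMeagre (filterSet F) := by
  classical
  set T : ℕ → Set (ℕ → Bool) :=
    fun m => {x | ∀ k, m ≤ k → ∃ n, n ∈ Set.Ico (e k) (e (k+1)) ∧ x n = true} with hT
  have hclosed : ∀ m, IsClosed (T m) := by
    intro m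
    have : T m = ⋂ k, ⋂ (_ : m ≤ k), ⋃ n ∈ Finset.Ico (e k) (e (k+1)), {x : ℕ → Bool | x n = true} := by
      ext x
      simp only [hT, mem_setOf_eq, mem_iInter, mem_iUnion, Finset.mem_Ico, Set.mem_Ico,
        exists_prop]
    rw [this]
    refine isClosed_iInter fun k => isClosed_iInter fun _ => ?_
    refine Set.Finite.isClosed_biUnion (Finset.finite_toSet _) fun n _ => ?_
    have : IsClosed ((fun x : ℕ → Bool => x n) ⁻¹' {true}) :=
      IsClosed.preimage (continuous_apply n) (isClosed_discrete _)
    exact this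
  have hnwd : ∀ m, interior (T m) = ∅ := by
    intro m
    by_contra hne
    obtain ⟨x, hx⟩ := nonempty_iff_ne_empty.mpr hne
    obtain ⟨p, hp⟩ := exists_prefix_subset isOpen_interior hx
    set k := max m p with hk
    have hpk : p ≤ e k := le_trans (le_max_right m p) (he.le_apply)
    set x' : ℕ → Bool := fun n => if e k ≤ n ∧ n < e (k+1) then false else x n with hx'
    have hx'T : x' ∈ T m := interior_subset (hp x' (fun n hn => by
      have : ¬ (e k ≤ n ∧ n < e (k+1)) := fun ⟨h1, _⟩ => absurd (lt_of_lt_of_le hn hpk) (not_lt.mpr h1)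
      show (if e k ≤ n ∧ n < e (k+1) then false else x n) = x n
      rw [if_neg this]))
    obtain ⟨n, hn1, hn2⟩ := hx'T k (le_max_left m p)
    rw [Set.mem_Ico] at hn1
    have : x' n = false := by
      show (if e k ≤ n ∧ n < e (k+1) then false else x n) = false
      rw [if_pos ⟨hn1.1, hn1.2⟩]
    rw [this] at hn2
    exact Bool.false_ne_true hn2
  have hsub : filterSet F ⊆ ⋃ m, T m := by
    intro x hx
    obtain ⟨m, hm⟩ := (h _ hx).exists_forall_of_atTop
    exact mem_iUnion.mpr ⟨m, fun k hk => by
      obtain ⟨n, hn1, hn2⟩ := hm k hk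
      exact ⟨n, hn2, hn1⟩⟩
  refine IsMeagre.mono hsub ?_
  refine (isMeagre_iff_countable_union_isNowhereDense).mpr ⟨Set.range T, ?_, countable_range _, ?_⟩
  · rintro t ⟨m, rfl⟩
    exact ((hclosed m).isNowhereDense_iff).mpr (hnwd m)
  · rw [Set.sUnion_range]

lemma blockStep {U : Set (ℕ → Bool)} (hUo : IsOpen U) (hUd : Dense U) (N : ℕ) :
    ∃ m, N < m ∧ ∀ s : ℕ → Bool, ∃ t : ℕ → Bool, (∀ n < N, t n = s n) ∧
      ∀ x, (∀ n < m, x n = t n) → x ∈ U := by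
  classical
  have key : ∀ p : Fin N → Bool, ∃ (y : ℕ → Bool) (my : ℕ),
      (∀ n (hn : n < N), y n = p ⟨n, hn⟩) ∧ ∀ x, (∀ n < my, x n = y n) → x ∈ U := by
    intro p
    have hVo : IsOpen {x : ℕ → Bool | ∀ i : Fin N, x i = p i} := by
      have : {x : ℕ → Bool | ∀ i : Fin N, x i = p i}
          = ⋂ i : Fin N, (fun x : ℕ → Bool => x i) ⁻¹' {p i} := by
        ext x; simp [Set.mem_iInter]
      rw [this]
      exact isOpen_iInter_of_finite fun i =>
        IsOpen.preimage (continuous_apply _) (isOpen_discrete _)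
    have hVne : Set.Nonempty {x : ℕ → Bool | ∀ i : Fin N, x i = p i} :=
      ⟨fun n => if hn : n < N then p ⟨n, hn⟩ else true, fun i => by simp [i.isLt]⟩
    obtain ⟨y, hyV, hyU⟩ := hUd.inter_open_nonempty _ hVo hVne
    obtain ⟨my, hmy⟩ := exists_prefix_subset hUo hyU
    exact ⟨y, my, fun n hn => hyV ⟨n, hn⟩, hmy⟩
  choose y my hy hmy using key
  refine ⟨N + 1 + Finset.univ.sup my, by omega, fun s => ?_⟩
  refine ⟨y (fun i => s i), fun n hn => hy _ n hn, fun x hx => hmy _ x (fun n hn => hx n ?_)⟩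
  have := Finset.le_sup (f := my) (Finset.mem_univ (fun i : Fin N => s i))
  omega

lemma feeble_of_meagre {F : Filter ℕ} (hm : IsMeagre (filterSet F)) :
    ∃ e : ℕ → ℕ, StrictMono e ∧
      ∀ A ∈ F, ∀ᶠ k in atTop, (A ∩ Set.Ico (e k) (e (k+1))).Nonempty := by
  classical
  rw [IsMeagre, mem_residual_iff] at hm
  obtain ⟨S, hSo, hSd, hScnt, hSsub⟩ := hm
  obtain ⟨g, hg⟩ := Set.Countable.exists_eq_range (hScnt.insert univ) (insert_nonempty _ _)
  have hrange : ∀ i, g i ∈ insert (univ : Set (ℕ → Bool)) S := by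
    intro i; rw [hg]; exact mem_range_self i
  have hgo : ∀ i, IsOpen (g i) := by
    intro i; rcases hrange i with h | h
    · rw [h]; exact isOpen_univ
    · exact hSo _ h
  have hgd : ∀ i, Dense (g i) := by
    intro i; rcases hrange i with h | h
    · rw [h]; exact dense_univ
    · exact hSd _ h
  set D : ℕ → Set (ℕ → Bool) := fun i => Nat.rec (g 0) (fun i Di => Di ∩ g (i+1)) i with hD
  have hDsucc : ∀ i, D (i+1) = D i ∩ g (i+1) := fun i => rfl
  have hDo : ∀ i, IsOpen (D i) := by
    intro i; induction i with
    | zero => exact hgo 0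
    | succ i ih => rw [hDsucc]; exact ih.inter (hgo (i+1))
  have hDd : ∀ i, Dense (D i) := by
    intro i; induction i with
    | zero => exact hgd 0
    | succ i ih => rw [hDsucc]; exact ih.inter_of_isOpen_left (hgd (i+1)) (hDo i)
  have hDanti : ∀ i j, i ≤ j → D j ⊆ D i := by
    intro i j hij
    induction j with
    | zero => rw [Nat.le_zero.mp hij]
    | succ j ih =>
      rcases Nat.lt_or_ge i (j+1) with h | h
      · exact ((hDsucc j) ▸ inter_subset_left).trans (ih (Nat.lt_succ_iff.mp h))
      · rw [le_antisymm hij h]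
  have hDle : ∀ i, D i ⊆ g i := by
    intro i; cases i with
    | zero => exact fun x hx => hx
    | succ i => rw [hDsucc]; exact inter_subset_right
  have hsub' : filterSet F ⊆ ⋃ i, (D i)ᶜ := by
    intro x hx
    have hxS : x ∉ ⋂₀ S := fun hmem => hSsub hmem hx
    have h1 : ¬ ∀ t ∈ S, x ∈ t := fun h => hxS (mem_sInter.mpr h)
    push_neg at h1
    obtain ⟨s, hsS, hxs⟩ := h1
    have : s ∈ range g := hg ▸ mem_insert_of_mem _ hsS
    obtain ⟨i, rfl⟩ := this
    exact mem_iUnion.mpr ⟨i, fun hmem => hxs (hDle i hmem)⟩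
  -- block construction
  have hstep : ∀ k N, ∃ m, N < m ∧ ∀ s : ℕ → Bool, ∃ t : ℕ → Bool, (∀ n < N, t n = s n) ∧
      ∀ x, (∀ n < m, x n = t n) → x ∈ D k := fun k N => blockStep (hDo k) (hDd k) N
  choose m hlt t ht1 ht2 using hstep
  set e : ℕ → ℕ := fun k => Nat.rec 0 (fun k ek => m k ek) k with he
  have hesucc : ∀ k, e (k+1) = m k (e k) := fun k => rfl
  have heS : StrictMono e := strictMono_nat_of_lt_succ (fun k => (hesucc k) ▸ hlt k (e k))
  refine ⟨e, heS, ?_⟩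
  intro A hA
  by_contra hev
  rw [Filter.not_eventually] at hev
  have hfr : ∀ N, ∃ k, N ≤ k ∧ A ∩ Set.Ico (e k) (e (k+1)) = ∅ := by
    intro N
    obtain ⟨k, hk1, hk2⟩ := (Filter.frequently_atTop.mp hev) N
    exact ⟨k, hk1, not_nonempty_iff_eq_empty.mp hk2⟩
  set P : ℕ → Prop := fun k => A ∩ Set.Ico (e k) (e (k+1)) = ∅ with hP
  set G : ℕ → (ℕ → Bool) := fun k => Nat.rec (fun _ => true)
    (fun k gk => fun n => if P k ∧ n < e (k+1) then t k (e k) gk n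
      else if n < e k then gk n else true) k with hGdef
  have hGsucc : ∀ k n, G (k+1) n = (if P k ∧ n < e (k+1) then t k (e k) (G k) n
      else if n < e k then G k n else true) := fun k n => rfl
  have hcoh : ∀ k n, n < e k → G (k+1) n = G k n := by
    intro k n hn
    rw [hGsucc]
    by_cases hPk : P k ∧ n < e (k+1)
    · rw [if_pos hPk]; exact ht1 k (e k) (G k) n hn
    · rw [if_neg hPk, if_pos hn]
  have hcoh2 : ∀ k k', k ≤ k' → ∀ n, n < e k → G k' n = G k n := by
    intro k k' hkk'
    induction k' with
    | zero =>
      have : k = 0 := Nat.le_zero.mp hkk'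
      subst this; intro n hn; rfl
    | succ k' ih =>
      intro n hn
      rcases Nat.lt_or_ge k (k'+1) with h | h
      · have hk' : k ≤ k' := Nat.lt_succ_iff.mp h
        rw [hcoh k' n (lt_of_lt_of_le hn (heS.monotone hk'))]
        exact ih hk' n hn
      · have : k = k' + 1 := le_antisymm hkk' h
        subst this; rfl
  set x : ℕ → Bool := fun n => G (n+1) n with hx
  have hxG : ∀ k n, n < e k → x n = G k n := by
    intro k n hn
    have h1 : n < e (n+1) := lt_of_lt_of_le (Nat.lt_succ_self n) (heS.le_apply)
    rcases le_total (n+1) k with h | h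
    · exact (hcoh2 (n+1) k h n h1).symm
    · exact hcoh2 k (n+1) h n hn
  have hblock : ∀ n, ∃ k, e k ≤ n ∧ n < e (k+1) := by
    intro n
    have hn1 : n < e (n+1) := lt_of_lt_of_le (Nat.lt_succ_self n) heS.le_apply
    set k := Nat.findGreatest (fun j => e j ≤ n) (n+1) with hk
    have hspec : e k ≤ n :=
      Nat.findGreatest_spec (P := fun j => e j ≤ n) (m := 0) (Nat.zero_le _)
        (show e 0 ≤ n from Nat.zero_le n)
    refine ⟨k, hspec, ?_⟩
    rcases Nat.lt_or_ge (k+1) (n+2) with h | h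
    · by_contra hcon
      push_neg at hcon
      exact Nat.findGreatest_is_greatest (P := fun j => e j ≤ n) (n := n+1)
        (hk ▸ Nat.lt_succ_self k) (by omega) hcon
    · exact lt_of_lt_of_le (show n < k+1 by omega) (heS.le_apply)
  have hxA : x ∈ filterSet F := by
    refine Filter.mem_of_superset hA ?_
    intro n hnA
    obtain ⟨k, hk1, hk2⟩ := hblock n
    have hnP : ¬ P k := by
      intro hPk
      have : n ∈ A ∩ Set.Ico (e k) (e (k+1)) :=
        Set.mem_inter hnA (Set.mem_Ico.mpr ⟨hk1, hk2⟩)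
      rw [hPk] at this
      exact notMem_empty n this
    show x n = true
    rw [hxG (k+1) n hk2, hGsucc, if_neg (fun hc => hnP hc.1), if_neg (not_lt.mpr hk1)]
  obtain ⟨i, hi⟩ := mem_iUnion.mp (hsub' hxA)
  obtain ⟨k, hki, hkP⟩ := hfr i
  have hxD : x ∈ D k := by
    refine ht2 k (e k) (G k) x ?_
    intro n hn
    have hn' : n < e (k+1) := (hesucc k) ▸ hn
    rw [hxG (k+1) n hn', hGsucc, if_pos ⟨hkP, hn'⟩]
  exact hi (hDanti i k hki hxD)


/-- The intersection of a countable nonempty family of free filters on `ℕ`, each without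
the Baire property as a subset of the Cantor space, does not have the Baire property. -/
theorem countable_inter_filters_not_baireProperty (H : Set (Filter ℕ))
    (hcnt : H.Countable) (hne : H.Nonempty)
    (hfree : ∀ F ∈ H, F.NeBot ∧ F ≤ Filter.cofinite)
    (hnbp : ∀ F ∈ H, ¬ HasBaireProperty (filterSet F)) :
    ¬ HasBaireProperty (⋂ F ∈ H, filterSet F) := by
  classical
  intro hBP
  obtain ⟨f, hf⟩ := hcnt.exists_eq_range hne
  set G := sSup H with hG
  have hinter : (⋂ F ∈ H, filterSet F) = filterSet G := by
    ext x
    simp only [mem_iInter, filterSet, mem_setOf_eq, hG, Filter.mem_sSup]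
  have hGne : G.NeBot := by
    obtain ⟨F0, hF0⟩ := hne
    exact Filter.NeBot.mono (hfree F0 hF0).1 (le_sSup hF0)
  have hGcof : G ≤ Filter.cofinite := sSup_le (fun F hF => (hfree F hF).2)
  rw [hinter] at hBP
  have hGmeagre := meagre_of_baireProperty hGne hGcof hBP
  obtain ⟨e0, he0, hfeeble⟩ := feeble_of_meagre hGmeagre
  have hnm : ∀ j : ℕ, ¬ IsMeagre (filterSet (f j)) := by
    intro j hmg
    apply hnbp (f j) (hf ▸ mem_range_self j)
    exact ⟨∅, filterSet (f j), isOpen_empty, hmg, by simp [symmDiff_def]⟩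
  have hNF : ∀ (j : ℕ) (e : ℕ → ℕ), StrictMono e →
      ∃ A ∈ f j, ∀ N, ∃ k, N ≤ k ∧ A ∩ Set.Ico (e k) (e (k+1)) = ∅ := by
    intro j e he
    by_contra hcon
    push_neg at hcon
    apply hnm j
    apply meagre_of_feeble he
    intro A hA
    obtain ⟨N, hN⟩ := hcon A hA
    exact Filter.eventually_atTop.mpr
      ⟨N, fun k hk => hN k hk⟩
  have hstep : ∀ (σ : ℕ → ℕ) (j : ℕ), ∃ (A : Set ℕ) (τ : ℕ → ℕ), StrictMono σ →
      (A ∈ f j ∧ StrictMono τ ∧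
        ∀ k, A ∩ Set.Ico (e0 (σ (τ k))) (e0 (σ (τ k + 1))) = ∅) := by
    intro σ j
    by_cases hσ : StrictMono σ
    · obtain ⟨A, hA, hAn⟩ := hNF j (e0 ∘ σ) (he0.comp hσ)
      choose K hK1 hK2 using hAn
      set τ : ℕ → ℕ := fun k => Nat.rec (K 0) (fun _ prev => K (prev + 1)) k with hτ
      have hτsucc : ∀ k, τ (k+1) = K (τ k + 1) := fun k => rfl
      have hτS : StrictMono τ := strictMono_nat_of_lt_succ (fun k =>
        lt_of_lt_of_le (Nat.lt_succ_self _) ((hτsucc k) ▸ hK1 (τ k + 1)))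
      refine ⟨A, τ, fun _ => ⟨hA, hτS, ?_⟩⟩
      intro k
      cases k with
      | zero => exact hK2 0
      | succ k => exact hK2 (τ k + 1)
    · exact ⟨∅, id, fun h => absurd h hσ⟩
  choose A τ hstep using hstep
  set SD : ℕ → ((ℕ → ℕ) × (ℕ → ℕ)) := fun n => Nat.rec ((id : ℕ → ℕ), (id : ℕ → ℕ))
    (fun n p => (p.1 ∘ τ p.1 n, p.2 ∘ τ p.1 n)) n with hSD
  set σn : ℕ → ℕ → ℕ := fun n => (SD n).1 with hσn
  set dn : ℕ → ℕ → ℕ := fun n => (SD n).2 with hdn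
  have hσsucc : ∀ n, σn (n+1) = σn n ∘ τ (σn n) n := fun n => rfl
  have hdsucc : ∀ n, dn (n+1) = dn n ∘ τ (σn n) n := fun n => rfl
  have hinv : ∀ n, StrictMono (σn n) ∧ (∀ k, σn n k ≤ dn n k ∧ dn n k + 1 ≤ σn n (k+1)) := by
    intro n; induction n with
    | zero => exact ⟨strictMono_id, fun k => ⟨le_refl k, le_refl (k+1)⟩⟩
    | succ n ih =>
      obtain ⟨hσS, hbd⟩ := ih
      obtain ⟨hAmem, hτS, hτemp⟩ := hstep (σn n) n hσS
      refine ⟨?_, fun k => ⟨?_, ?_⟩⟩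
      · rw [hσsucc]; exact hσS.comp hτS
      · rw [hσsucc, hdsucc]; exact (hbd _).1
      · rw [hσsucc, hdsucc]
        calc dn n (τ (σn n) n k) + 1 ≤ σn n (τ (σn n) n k + 1) := (hbd _).2
          _ ≤ σn n (τ (σn n) n (k+1)) :=
            hσS.monotone (Nat.succ_le_of_lt (hτS (Nat.lt_succ_self k)))
  have hav : ∀ n (i : ℕ), i < n → ∀ k,
      (A (σn i) i) ∩ Set.Ico (e0 (dn n k)) (e0 (dn n k + 1)) = ∅ := by
    intro n; induction n with
    | zero => intro i h; omega
    | succ n ih =>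
      intro i hi k
      rcases Nat.lt_or_ge i n with h | h
      · rw [hdsucc]; exact ih i h (τ (σn n) n k)
      · have : i = n := by omega
        subst this
        obtain ⟨hσS, hbd⟩ := hinv i
        obtain ⟨hAmem, hτS, hτemp⟩ := hstep (σn i) i hσS
        rw [hdsucc]
        apply Set.eq_empty_of_subset_empty
        intro p hp
        have hsubI : Set.Ico (e0 (dn i (τ (σn i) i k))) (e0 (dn i (τ (σn i) i k) + 1))
            ⊆ Set.Ico (e0 (σn i (τ (σn i) i k))) (e0 (σn i (τ (σn i) i k + 1))) :=
          Set.Ico_subset_Ico (he0.monotone (hbd _).1) (he0.monotone (hbd _).2)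
        have hmem : p ∈ A (σn i) i ∩
            Set.Ico (e0 (σn i (τ (σn i) i k))) (e0 (σn i (τ (σn i) i k + 1))) :=
          ⟨hp.1, hsubI hp.2⟩
        rw [hτemp k] at hmem
        exact hmem
  set c : ℕ → ℕ := fun n => dn (n+1) n with hc
  have hcav : ∀ n i, i ≤ n → (A (σn i) i) ∩ Set.Ico (e0 (c n)) (e0 (c n + 1)) = ∅ :=
    fun n i hi => hav (n+1) i (by omega) n
  have hcge : ∀ n, n ≤ c n := by
    intro n
    have h1 : n ≤ σn (n+1) n := (hinv (n+1)).1.le_apply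
    have h2 := ((hinv (n+1)).2 n).1
    have h3 : c n = dn (n+1) n := rfl
    omega
  set B : Set ℕ := {p | ∀ n, p ∉ Set.Ico (e0 (c n)) (e0 (c n + 1))} with hB
  have hBmem : ∀ j, B ∈ f j := by
    intro j
    obtain ⟨hAmem, -, -⟩ := hstep (σn j) j (hinv j).1
    set M : ℕ := (Finset.range j).sup (fun n => e0 (c n + 1)) with hM
    have hsup : A (σn j) j ∩ Set.Ici M ⊆ B := by
      rintro p ⟨hpA, hpM⟩ n hpI
      rcases Nat.lt_or_ge n j with h | h
      · have h1 : e0 (c n + 1) ≤ M := by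
          rw [hM]; exact Finset.le_sup (f := fun n => e0 (c n + 1)) (Finset.mem_range.mpr h)
        have h2 := hpI.2
        have h3 : M ≤ p := hpM
        omega
      · have h4 := hcav n j h
        have : p ∈ A (σn j) j ∩ Set.Ico (e0 (c n)) (e0 (c n + 1)) := ⟨hpA, hpI⟩
        rw [h4] at this
        exact this
    have hIci : Set.Ici M ∈ f j := by
      refine (hfree (f j) (hf ▸ mem_range_self j)).2 ?_
      simp only [Filter.mem_cofinite, compl_Ici]
      exact Set.finite_Iio M
    exact Filter.mem_of_superset (Filter.inter_mem hAmem hIci) hsup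
  have hBG : B ∈ G := by
    rw [hG, Filter.mem_sSup]
    intro F hF
    rw [hf] at hF
    obtain ⟨j, rfl⟩ := hF
    exact hBmem j
  obtain ⟨N, hN⟩ := Filter.eventually_atTop.mp (hfeeble B hBG)
  obtain ⟨p, hp⟩ := hN (c N) (hcge N)
  exact hp.1 N hp.2
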